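/- Under Assumptions A1 and A2, and with f = 0: a pair (u, τ) ∈ U × Λ* solves the interface flux formulation (A u − T^⊤ τ = 0, (I − X) T u = 0, (I + X^⊤) τ = 0) if and only if u = 0 and τ ∈ Z, where Z := ker(T^⊤) ∩ ker(I + X^⊤). -/

import Mathlib

/-!
A functional with `(I + X^⊤) τ = 0` vanishes on the fixed points of `X`, and by A2 these contain
`T (range R)`; hence `R^⊤ T^⊤ τ = 0`. If `u` solves the homogeneous system, A2 gives `u = R û`,
and testing the first equation on `range R` yields `Â û = R^⊤ T^⊤ τ = 0`, so `û = 0` because `Â`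
has a left inverse.
-/

/-- The transpose (dual map) `B^⊤ : Y* → X*` of a bounded linear operator `B : X → Y`. -/
noncomputable def trOp {X Y : Type*} [NormedAddCommGroup X] [NormedSpace ℂ X]
    [NormedAddCommGroup Y] [NormedSpace ℂ Y] (B : X →L[ℂ] Y) :
    (Y →L[ℂ] ℂ) →L[ℂ] (X →L[ℂ] ℂ) :=
  (ContinuousLinearMap.compL ℂ X Y ℂ).flip B

section Transpose

variable {E F G : Type*} [NormedAddCommGroup E] [NormedSpace ℂ E]
  [NormedAddCommGroup F] [NormedSpace ℂ F] [NormedAddCommGroup G] [NormedSpace ℂ G]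

lemma apply_eq_zero_of_apply_eq_self {X : F →L[ℂ] F} {τ : F →L[ℂ] ℂ}
    (hτ : τ + trOp X τ = 0) {x : F} (hx : X x = x) : τ x = 0 := by
  have h : τ x + τ (X x) = 0 := congrArg (fun g : F →L[ℂ] ℂ => g x) hτ
  rwa [hx, add_self_eq_zero] at h

lemma trOp_trOp_eq_zero_of_forall_apply_eq_self {R : E →L[ℂ] F} {T : F →L[ℂ] G}
    {X : G →L[ℂ] G} (hfix : ∀ v, X (T (R v)) = T (R v)) {τ : G →L[ℂ] ℂ}
    (hτ : τ + trOp X τ = 0) : trOp R (trOp T τ) = 0 := by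
  ext v
  exact apply_eq_zero_of_apply_eq_self hτ (hfix v)

lemma eq_zero_of_trOp_apply_eq_zero {R : E →L[ℂ] F} {A : F →L[ℂ] (F →L[ℂ] ℂ)}
    (Ahatinv : (E →L[ℂ] ℂ) →L[ℂ] E) (hAhat_left : ∀ v, Ahatinv (trOp R (A (R v))) = v)
    {u : F} (hu : u ∈ LinearMap.range (R : E →ₗ[ℂ] F)) (h : trOp R (A u) = 0) : u = 0 := by
  obtain ⟨v, rfl : R v = u⟩ := hu
  rw [← hAhat_left v, h, map_zero, map_zero]

end Transpose

theorem statement3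
    {Uhat U Lam : Type*}
    [NormedAddCommGroup Uhat] [InnerProductSpace ℂ Uhat]
    [NormedAddCommGroup U] [InnerProductSpace ℂ U]
    [NormedAddCommGroup Lam] [InnerProductSpace ℂ Lam]
    (R : Uhat →L[ℂ] U) (T : U →L[ℂ] Lam) (X : Lam →L[ℂ] Lam)
    -- Assumption A2
    (hA2 : LinearMap.range (R : Uhat →ₗ[ℂ] U) = LinearMap.ker ((ContinuousLinearMap.id ℂ Lam - X).comp T : U →ₗ[ℂ] Lam))
    (A : U →L[ℂ] (U →L[ℂ] ℂ))
    -- `Â = R^⊤ A R` is bijective with bounded inverse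
    (Ahatinv : (Uhat →L[ℂ] ℂ) →L[ℂ] Uhat)
    (hAhat_left : ∀ uhat : Uhat, Ahatinv (trOp R (A (R uhat))) = uhat) :
    ∀ (u : U) (τ : Lam →L[ℂ] ℂ),
      (A u - trOp T τ = 0 ∧ T u - X (T u) = 0 ∧ τ + trOp X τ = 0) ↔
      (u = 0 ∧ trOp T τ = 0 ∧ τ + trOp X τ = 0) := by
  intro u τ
  constructor
  · rintro ⟨hAu, hTu, hτ⟩
    rw [sub_eq_zero] at hAu
    have hfix : ∀ v, X (T (R v)) = T (R v) := fun v =>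
      (sub_eq_zero.mp (LinearMap.mem_ker.mp (hA2.le (LinearMap.mem_range_self _ v)))).symm
    have hu : u ∈ LinearMap.range (R : Uhat →ₗ[ℂ] U) := hA2.ge (LinearMap.mem_ker.mpr hTu)
    have hu0 : u = 0 := eq_zero_of_trOp_apply_eq_zero Ahatinv hAhat_left hu
      (hAu ▸ trOp_trOp_eq_zero_of_forall_apply_eq_self hfix hτ)
    refine ⟨hu0, ?_, hτ⟩
    rw [← hAu, hu0, map_zero]
  · rintro ⟨rfl, hTτ, hτ⟩
    exact ⟨by rw [hTτ, map_zero, sub_zero], by rw [map_zero, map_zero, sub_zero], hτ⟩
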